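/- Let I : 𝔻 → 𝔻 be an inner function with I(0) = 0. Then I, viewed as a measurable map from 𝕋 to 𝕋 via its radial boundary values, is measure-preserving for normalized Lebesgue measure: for every Borel set Q ⊆ 𝕋, the Lebesgue measure of I⁻¹(Q) = {ζ ∈ 𝕋 : I(ζ) ∈ Q} equals the Lebesgue measure of Q. -/

import Mathlib

open MeasureTheory Complex Filter Real Set

noncomputable section

def unitDisk : Set ℂ := {z : ℂ | ‖z‖ < 1}

def unitCircle : Set ℂ := {z : ℂ | ‖z‖ = 1}

/-- Normalized Lebesgue (arclength) measure on the unit circle, realized as a measure on `ℂ`. -/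
def mCircle : Measure ℂ :=
  (ENNReal.ofReal (2 * π))⁻¹ •
    Measure.map (fun θ : ℝ => Complex.exp (θ * Complex.I))
      (volume.restrict (Set.Ioc 0 (2 * π)))

/-- `f` has radial limit `L` at the boundary point `ζ`. -/
def HasRadialLimit (f : ℂ → ℂ) (ζ L : ℂ) : Prop :=
  Filter.Tendsto (fun r : ℝ => f ((r : ℂ) * ζ)) (nhdsWithin 1 (Set.Iio 1)) (nhds L)

/-- `I` is an inner function on the unit disk with boundary-value function `Ib`. -/
def IsInner (I Ib : ℂ → ℂ) : Prop :=
  DifferentiableOn ℂ I unitDisk ∧ Set.MapsTo I unitDisk unitDisk ∧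
    ∀ᵐ ζ ∂mCircle, HasRadialLimit I ζ (Ib ζ) ∧ ‖Ib ζ‖ = 1

/-- Poisson integral of a (positive finite) measure on the circle. -/
def poissonIntegral (μ : Measure ℂ) (z : ℂ) : ℝ :=
  ∫ ζ, (1 - ‖z‖ ^ 2) / ‖ζ - z‖ ^ 2 ∂μ

/-- `σ` is the Clark measure of the inner function `I` at `α ∈ 𝕋`. -/
def IsClarkMeasure (I : ℂ → ℂ) (α : ℂ) (σ : Measure ℂ) : Prop :=
  IsFiniteMeasure σ ∧ σ unitCircleᶜ = 0 ∧
    ∀ z ∈ unitDisk, poissonIntegral σ z =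
      (1 - ‖I z‖ ^ 2) / ‖α - I z‖ ^ 2

/-! The push-forward `ν = Ib_* m` is a probability measure on `𝕋`, and its analytic moments
vanish: `∫ zⁿ dν = ∫ Ibⁿ dm` is the limit as `r → 1⁻` of `∫ I(rζ)ⁿ dm(ζ) = I(0)ⁿ = 0` (mean value
property and dominated convergence). On `𝕋` we have `z̄ = z⁻¹`, so all moments `∫ zʲ z̄ᵏ` of `ν`
and of `m` equal `δⱼₖ`. Since the star-algebra generated by `z` separates points of the compact
set `𝕋`, it determines finite measures there (Stone–Weierstrass), hence `ν = m`. -/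

open scoped ComplexConjugate Topology BoundedContinuousFunction

theorem ext_of_integral_pow_mul_conj_pow_eq_of_compactSpace {K : Set ℂ} [CompactSpace K]
    {P P' : Measure K} [IsFiniteMeasure P] [IsFiniteMeasure P']
    (h : ∀ j k : ℕ, ∫ z, (z : ℂ) ^ j * conj (z : ℂ) ^ k ∂P =
      ∫ z, (z : ℂ) ^ j * conj (z : ℂ) ^ k ∂P') : P = P' := by
  let x : K →ᵇ ℂ := .mkOfCompact ⟨Subtype.val, continuous_subtype_val⟩
  refine ext_of_forall_mem_subalgebra_integral_eq_of_pseudoEMetric_complete_countable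
    (A := StarAlgebra.adjoin ℂ {x}) ?_ fun g hg ↦ ?_
  · intro a b hab
    let φ := BoundedContinuousFunction.toContinuousMapStarₐ (α := K) (β := ℂ) ℂ
    have hx : φ x ∈ (StarAlgebra.adjoin ℂ {x}).map φ :=
      StarSubalgebra.mem_map.mpr ⟨x, StarAlgebra.self_mem_adjoin_singleton ℂ x, rfl⟩
    exact ⟨_, ⟨_, hx, rfl⟩, fun h ↦ hab (Subtype.ext h)⟩
  · rw [← StarSubalgebra.mem_toSubalgebra, StarAlgebra.adjoin_toSubalgebra,
      ← Subalgebra.mem_toSubmodule, Algebra.adjoin_eq_span, Set.star_singleton,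
      Set.singleton_union] at hg
    induction hg using Submodule.span_induction with
    | mem y hy =>
      obtain ⟨j, k, rfl⟩ := (Submonoid.mem_closure_pair _ _ _).mp hy
      simpa [x] using h j k
    | zero => simp
    | add f g _ _ hf hg =>
      simp only [BoundedContinuousFunction.coe_add, Pi.add_apply]
      rw [integral_add (f.integrable P) (g.integrable P),
        integral_add (f.integrable P') (g.integrable P'), hf, hg]
    | smul c f _ hf =>
      rw [BoundedContinuousFunction.coe_smul, integral_smul, integral_smul, hf]

theorem ext_of_integral_pow_mul_conj_pow_eq {K : Set ℂ} (hK : IsCompact K)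
    {μ ν : Measure ℂ} [IsFiniteMeasure μ] [IsFiniteMeasure ν]
    (hμ : ∀ᵐ z ∂μ, z ∈ K) (hν : ∀ᵐ z ∂ν, z ∈ K)
    (h : ∀ j k : ℕ, ∫ z, z ^ j * conj z ^ k ∂μ = ∫ z, z ^ j * conj z ^ k ∂ν) : μ = ν := by
  have : CompactSpace K := isCompact_iff_compactSpace.mp hK
  have hval : MeasurableEmbedding ((↑) : K → ℂ) := .subtype_coe hK.measurableSet
  have hmap {ρ : Measure ℂ} (hρ : ∀ᵐ z ∂ρ, z ∈ K) : (ρ.comap ((↑) : K → ℂ)).map (↑) = ρ := by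
    rw [map_comap_subtype_coe hK.measurableSet, Measure.restrict_eq_self_of_ae_mem hρ]
  rw [← hmap hμ, ← hmap hν]
  congr 1
  refine ext_of_integral_pow_mul_conj_pow_eq_of_compactSpace fun j k ↦ ?_
  have hjk := h j k
  rwa [← hmap hμ, ← hmap hν, hval.integral_map, hval.integral_map] at hjk

theorem integral_pow_mul_conj_pow_eq_ite {ν : Measure ℂ} [IsProbabilityMeasure ν]
    (hν : ∀ᵐ z ∂ν, ‖z‖ = 1) (h : ∀ n ≠ 0, ∫ z, z ^ n ∂ν = 0) (j k : ℕ) :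
    ∫ z, z ^ j * conj z ^ k ∂ν = if j = k then 1 else 0 := by
  have hle {j k : ℕ} (hkj : k ≤ j) : ∫ z, z ^ j * conj z ^ k ∂ν = if j = k then 1 else 0 := by
    have hae : (fun z ↦ z ^ j * conj z ^ k) =ᵐ[ν] fun z ↦ z ^ (j - k) := by
      filter_upwards [hν] with z hz
      rw [← Nat.sub_add_cancel hkj, pow_add, mul_assoc, ← mul_pow, mul_conj, normSq_eq_norm_sq,
        hz]
      simp
    rw [integral_congr_ae hae]
    split_ifs with hjk
    · simp [hjk]
    · exact h _ (by omega)
  rcases le_total k j with hkj | hjk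
  · exact hle hkj
  · calc ∫ z, z ^ j * conj z ^ k ∂ν = conj (∫ z, z ^ k * conj z ^ j ∂ν) := by
          rw [← integral_conj]; simp [mul_comm]
      _ = if j = k then 1 else 0 := by
          rw [hle hjk]
          by_cases hjk' : j = k <;> simp [hjk', eq_comm]

lemma isCompact_unitCircle : IsCompact unitCircle := by
  simpa [unitCircle, Metric.sphere] using isCompact_sphere (0 : ℂ) 1

lemma ofReal_mul_mem_unitDisk {r : ℝ} (hr : |r| < 1) {ζ : ℂ} (hζ : ζ ∈ unitCircle) :
    (r : ℂ) * ζ ∈ unitDisk := by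
  have hζ : ‖ζ‖ = 1 := hζ
  simpa [unitDisk, hζ] using hr

lemma ae_mem_unitCircle_mCircle : ∀ᵐ ζ ∂mCircle, ζ ∈ unitCircle := by
  rw [mCircle, Measure.ae_ennreal_smul_measure_iff (by simp [ENNReal.mul_eq_top]),
    ae_map_iff (p := (· ∈ unitCircle)) (by fun_prop) isCompact_unitCircle.measurableSet]
  exact .of_forall fun θ ↦ by simp [unitCircle, norm_exp]

instance : IsProbabilityMeasure mCircle := by
  constructor
  rw [mCircle, Measure.smul_apply, Measure.map_apply (by fun_prop) MeasurableSet.univ,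
    preimage_univ, Measure.restrict_apply_univ, Real.volume_Ioc, sub_zero, smul_eq_mul]
  exact ENNReal.inv_mul_cancel (by simp [pi_pos]) ENNReal.ofReal_ne_top

theorem integral_mCircle_comp_ofReal_mul {E : Type*} [NormedAddCommGroup E] [NormedSpace ℝ E]
    {f : ℂ → E} {r : ℝ} (hf : AEStronglyMeasurable (fun ζ ↦ f (r * ζ)) mCircle) :
    ∫ ζ, f (r * ζ) ∂mCircle = circleAverage f 0 r := by
  have hc : (ENNReal.ofReal (2 * π))⁻¹ ≠ 0 := by simp [ENNReal.mul_eq_top]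
  rw [mCircle] at hf ⊢
  rw [integral_smul_measure, integral_map (by fun_prop)
    (hf.mono_ac (Measure.absolutelyContinuous_smul hc)),
    circleAverage_def, intervalIntegral.integral_of_le two_pi_pos.le]
  simp [circleMap, pi_nonneg]

lemma integral_mCircle_pow {n : ℕ} (hn : n ≠ 0) : ∫ ζ, ζ ^ n ∂mCircle = 0 := by
  have h := integral_mCircle_comp_ofReal_mul (f := (· ^ n)) (r := 1)
    (by fun_prop : Continuous fun ζ : ℂ ↦ ((1 : ℝ) * ζ) ^ n).aestronglyMeasurable
  have hmean := (differentiable_pow n : Differentiable ℂ fun ζ : ℂ ↦ ζ ^ n).diffContOnCl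
    (s := Metric.ball 0 |1|) |>.circleAverage
  simpa [hmean, zero_pow hn] using h

theorem integral_mCircle_eq_apply_zero_of_hasRadialLimit {g gb : ℂ → ℂ}
    (hg : DifferentiableOn ℂ g unitDisk) {C : ℝ} (hC : ∀ z ∈ unitDisk, ‖g z‖ ≤ C)
    (hlim : ∀ᵐ ζ ∂mCircle, HasRadialLimit g ζ (gb ζ)) :
    ∫ ζ, gb ζ ∂mCircle = g 0 := by
  have hmeas {r : ℝ} (hr : |r| < 1) : AEStronglyMeasurable (fun ζ ↦ g (r * ζ)) mCircle := by
    have hcont : ContinuousOn (fun ζ ↦ g (r * ζ)) unitCircle :=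
      hg.continuousOn.comp (by fun_prop) fun ζ hζ ↦ ofReal_mul_mem_unitDisk hr hζ
    simpa [Measure.restrict_eq_self_of_ae_mem ae_mem_unitCircle_mCircle] using
      hcont.aestronglyMeasurable (μ := mCircle) isCompact_unitCircle.measurableSet
  have hmean {r : ℝ} (hr : |r| < 1) : ∫ ζ, g (r * ζ) ∂mCircle = g 0 := by
    rw [integral_mCircle_comp_ofReal_mul (hmeas hr)]
    refine (hg.diffContOnCl_ball fun z hz ↦ ?_).circleAverage
    simp only [Metric.mem_closedBall, dist_zero_right] at hz
    exact hz.trans_lt hr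
  have hnear : ∀ᶠ r in 𝓝[<] (1 : ℝ), |r| < 1 :=
    Filter.mem_of_superset (Ioo_mem_nhdsLT (by norm_num : (-1 : ℝ) < 1)) fun r hr ↦ abs_lt.mpr hr
  have hconv : Tendsto (fun r : ℝ ↦ ∫ ζ, g (r * ζ) ∂mCircle) (𝓝[<] 1)
      (𝓝 (∫ ζ, gb ζ ∂mCircle)) :=
    tendsto_integral_filter_of_dominated_convergence (fun _ ↦ C)
      (hnear.mono fun r hr ↦ hmeas hr)
      (hnear.mono fun r hr ↦ ae_mem_unitCircle_mCircle.mono fun ζ hζ ↦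
        hC _ (ofReal_mul_mem_unitDisk hr hζ))
      (integrable_const C) hlim
  exact tendsto_nhds_unique hconv
    (tendsto_const_nhds.congr' (hnear.mono fun r hr ↦ (hmean hr).symm))

theorem eq_mCircle_of_integral_pow_eq_zero {ν : Measure ℂ} [IsProbabilityMeasure ν]
    (hν : ∀ᵐ z ∂ν, z ∈ unitCircle) (h : ∀ n ≠ 0, ∫ z, z ^ n ∂ν = 0) : ν = mCircle :=
  ext_of_integral_pow_mul_conj_pow_eq isCompact_unitCircle hν ae_mem_unitCircle_mCircle
    fun j k ↦ by
      rw [integral_pow_mul_conj_pow_eq_ite hν h,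
        integral_pow_mul_conj_pow_eq_ite ae_mem_unitCircle_mCircle fun _ ↦ integral_mCircle_pow]

/-- an inner function vanishing at the origin is measure-preserving on the
circle (via its boundary values). -/
theorem inner_measurePreserving (I Ib : ℂ → ℂ) (hI : IsInner I Ib) (h0 : I 0 = 0)
    (hIb : Measurable Ib) :
    ∀ Q : Set ℂ, MeasurableSet Q → Q ⊆ unitCircle → mCircle (Ib ⁻¹' Q) = mCircle Q := by
  obtain ⟨hd, hmaps, hlim⟩ := hI
  have : IsProbabilityMeasure (mCircle.map Ib) := Measure.isProbabilityMeasure_map hIb.aemeasurable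
  have hmem : ∀ᵐ z ∂mCircle.map Ib, z ∈ unitCircle :=
    (ae_map_iff hIb.aemeasurable isCompact_unitCircle.measurableSet).mpr (hlim.mono fun _ h ↦ h.2)
  have hmoment (n : ℕ) (hn : n ≠ 0) : ∫ z, z ^ n ∂mCircle.map Ib = 0 := by
    rw [integral_map hIb.aemeasurable (continuous_pow n).aestronglyMeasurable,
      integral_mCircle_eq_apply_zero_of_hasRadialLimit (hd.pow n) (C := 1)
        (fun z hz ↦ by simpa using pow_le_one₀ (norm_nonneg _) (hmaps hz).le)
        (hlim.mono fun _ h ↦ h.1.pow n), Pi.pow_apply, h0, zero_pow hn]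
  have hpush : mCircle.map Ib = mCircle := eq_mCircle_of_integral_pow_eq_zero hmem hmoment
  intro Q hQ _
  rw [← Measure.map_apply hIb hQ, hpush]
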